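/- Let F = (i : X → S, o : Y → S, v) and G = (i' : Y → T, o' : Z → T, w) be open dynamical systems between finite types, and let P be a finite type with jS : S → P, jT : T → P forming a pushout of o and i' in the category of types. Let u = jS_* ∘ v ∘ jS^* + jT_* ∘ w ∘ jT^* be the vector field of the composite G ∘ F. Suppose x ∈ ℝ^S is a steady state of F with inflows I ∈ ℝ^X and outflows O ∈ ℝ^Y, that y ∈ ℝ^T is a steady state of G with inflows O and outflows Q ∈ ℝ^Z, and that x ∘ o = y ∘ i'. Then there exists a unique z ∈ ℝ^P with z ∘ jS = x and z ∘ jT = y, and this z satisfies u(z) + (jS ∘ i)_*(I) − (jT ∘ o')_*(Q) = 0; that is, z is a steady state of G ∘ F with inflows I and outflows Q. -/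

import Mathlib

open scoped Classical

/-- The pushforward of a function `ψ : S → ℝ` along `f : S → S'`. -/
noncomputable def pushforward {S S' : Type} [Fintype S] (f : S → S') (ψ : S → ℝ) : S' → ℝ :=
  fun s' => ∑ s : S, if f s = s' then ψ s else 0

/-- The pullback of a function `ψ : S' → ℝ` along `f : S → S'`. -/
def pullback {S S' : Type} (f : S → S') (ψ : S' → ℝ) : S → ℝ := ψ ∘ f

lemma pushforward_sub {S S' : Type} [Fintype S] (f : S → S') (φ ψ : S → ℝ) :
    pushforward f (φ - ψ) = pushforward f φ - pushforward f ψ := by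
  funext s'
  simp only [pushforward, Pi.sub_apply]
  rw [← Finset.sum_sub_distrib]
  exact Finset.sum_congr rfl fun s _ => by split_ifs <;> simp

lemma pushforward_comp {S T P : Type} [Fintype S] [Fintype T]
    (f : S → T) (g : T → P) (ψ : S → ℝ) :
    pushforward g (pushforward f ψ) = pushforward (g ∘ f) ψ := by
  funext p
  simp only [pushforward, Function.comp]
  calc ∑ t, (if g t = p then ∑ s, if f s = t then ψ s else 0 else 0)
      = ∑ t, ∑ s, (if f s = t then (if g t = p then ψ s else 0) else 0) := by
        refine Finset.sum_congr rfl fun t _ => ?_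
        split_ifs with h
        · exact Finset.sum_congr rfl fun s _ => by split_ifs <;> simp [h]
        · symm; refine Finset.sum_eq_zero fun s _ => by split_ifs <;> simp [h]
    _ = ∑ s, ∑ t, (if f s = t then (if g t = p then ψ s else 0) else 0) := Finset.sum_comm
    _ = ∑ s, (if g (f s) = p then ψ s else 0) := by
        refine Finset.sum_congr rfl fun s _ => ?_
        rw [Finset.sum_ite_eq]
        simp

/-- Steady states of composable open dynamical systems that agree on the common
interface glue to a unique steady state of the composite open dynamical system. -/
theorem steady_states_compose {X Y Z S T P : Type}
    [Fintype X] [Fintype Y] [Fintype Z] [Fintype S] [Fintype T] [Fintype P]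
    (i : X → S) (o : Y → S) (v : (S → ℝ) → (S → ℝ)) (hv : ContDiff ℝ (⊤ : ℕ∞) v)
    (i' : Y → T) (o' : Z → T) (w : (T → ℝ) → (T → ℝ)) (hw : ContDiff ℝ (⊤ : ℕ∞) w)
    (jS : S → P) (jT : T → P)
    (hpo : CategoryTheory.IsPushout (C := Type) (TypeCat.ofHom o)
      (TypeCat.ofHom i') (TypeCat.ofHom jS)
      (TypeCat.ofHom jT))
    (x : S → ℝ) (y : T → ℝ) (I : X → ℝ) (O : Y → ℝ) (Q : Z → ℝ)
    (hx : v x + pushforward i I - pushforward o O = 0)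
    (hy : w y + pushforward i' O - pushforward o' Q = 0)
    (hxy : x ∘ o = y ∘ i') :
    (∃! z : P → ℝ, z ∘ jS = x ∧ z ∘ jT = y) ∧
    ∀ z : P → ℝ, z ∘ jS = x → z ∘ jT = y →
      (fun ψ => pushforward jS (v (pullback jS ψ)) + pushforward jT (w (pullback jT ψ))) z
        + pushforward (jS ∘ i) I - pushforward (jT ∘ o') Q = 0 := by
  constructor
  · have hxy' : CategoryTheory.CategoryStruct.comp (TypeCat.ofHom o) (TypeCat.ofHom x) =
        CategoryTheory.CategoryStruct.comp (TypeCat.ofHom i') (TypeCat.ofHom y) :=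
      congrArg TypeCat.ofHom hxy
    refine ⟨TypeCat.homEquiv (hpo.desc _ _ hxy'),
      ⟨congrArg TypeCat.homEquiv (hpo.inl_desc _ _ hxy'),
        congrArg TypeCat.homEquiv (hpo.inr_desc _ _ hxy')⟩, ?_⟩
    intro z' ⟨h1, h2⟩
    refine congrArg TypeCat.homEquiv (hpo.hom_ext (k := TypeCat.ofHom z') ?_ ?_)
    · exact (congrArg TypeCat.ofHom h1).trans (hpo.inl_desc _ _ hxy').symm
    · exact (congrArg TypeCat.ofHom h2).trans (hpo.inr_desc _ _ hxy').symm
  · intro z hz1 hz2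
    have hpx : pullback jS z = x := hz1
    have hpy : pullback jT z = y := hz2
    have hvx : v x = pushforward o O - pushforward i I :=
      eq_sub_of_add_eq (sub_eq_zero.mp hx)
    have hwy : w y = pushforward o' Q - pushforward i' O :=
      eq_sub_of_add_eq (sub_eq_zero.mp hy)
    have hcomm : jS ∘ o = jT ∘ i' := congrArg TypeCat.homEquiv hpo.w
    show pushforward jS (v (pullback jS z)) + pushforward jT (w (pullback jT z))
        + pushforward (jS ∘ i) I - pushforward (jT ∘ o') Q = 0
    rw [hpx, hpy, hvx, hwy, pushforward_sub, pushforward_sub,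
      pushforward_comp, pushforward_comp, pushforward_comp, pushforward_comp, hcomm]
    abel
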